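/- Fix u, v ∈ (0,1) and 0 < s < t. Then the partial derivative of ψ(s,t;u,v) with respect to s exists and equals ∫₀ᵘ φ(h(w)) · ( (√t·Φ⁻¹(v) − √s·Φ⁻¹(w))/(2·(t−s)^{3/2}) − Φ⁻¹(w)/(2·√(s·(t−s))) ) dw, where h(w) = (√t·Φ⁻¹(v) − √s·Φ⁻¹(w))/√(t−s). -/

import Mathlib

open MeasureTheory Set Filter

/-- Density of the standard normal distribution (φ). -/
noncomputable def stdNormalPDF (x : ℝ) : ℝ := (Real.sqrt (2 * Real.pi))⁻¹ * Real.exp (-x ^ 2 / 2)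

/-- Cumulative distribution function of the standard normal distribution (Φ). -/
noncomputable def stdNormalCDF (x : ℝ) : ℝ := ∫ t in Set.Iic x, stdNormalPDF t

/-- The standard normal quantile function (Φ⁻¹), the inverse of Φ on (0,1). -/
noncomputable def stdNormalCDFInv : ℝ → ℝ := Function.invFun stdNormalCDF

/-- The integrand of the Brownian-copula kernel; the `if` branches encode the
conventions Φ⁻¹(0) = -∞ (so Φ(·) = 0) and Φ⁻¹(1) = +∞ (so Φ(·) = 1). -/
noncomputable def psiIntegrand (s t v w : ℝ) : ℝ :=
  if v ≤ 0 then 0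
  else if 1 ≤ v then 1
  else stdNormalCDF ((Real.sqrt (max s t) * stdNormalCDFInv v -
      Real.sqrt (min s t) * stdNormalCDFInv w) / Real.sqrt |t - s|)

/-- The Brownian-copula kernel ψ(s,t;u,v). -/
noncomputable def psi (s t u v : ℝ) : ℝ :=
  if 0 < |t - s| then ∫ w in (0:ℝ)..u, psiIntegrand s t v w
  else if 0 < t then min u v
  else u * v

/-! For `0 < σ < t` the integrand of `ψ(σ,t;u,v)` is `Φ(h_σ(w))` with
`h_σ(w) = (√t Φ⁻¹(v) - √σ Φ⁻¹(w)) / √(t - σ)`, so we differentiate under the integral sign.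
Although `Φ⁻¹(w)` is unbounded as `w → 0`, the `σ`-derivative
`φ(h) (h / (2(t - σ)) - Φ⁻¹(w) / (2√(σ(t - σ))))` is bounded uniformly in `w` and locally
uniformly in `σ`: `φ(h)|h| ≤ 1`, and `√σ Φ⁻¹(w) = √t Φ⁻¹(v) - h √(t - σ)` controls
`φ(h)|Φ⁻¹(w)|` by the same bound. -/

open Topology ProbabilityTheory

lemma stdNormalPDF_eq_gaussianPDFReal : stdNormalPDF = gaussianPDFReal 0 1 := by
  ext x
  simp [stdNormalPDF, gaussianPDFReal]

lemma continuous_stdNormalPDF : Continuous stdNormalPDF := by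
  unfold stdNormalPDF
  fun_prop

lemma stdNormalCDF_eq_cdf : stdNormalCDF = cdf (gaussianReal 0 1) := by
  ext x
  rw [cdf_eq_real, measureReal_def, gaussianReal_apply_eq_integral _ one_ne_zero,
    ENNReal.toReal_ofReal (setIntegral_nonneg measurableSet_Iic fun y _ ↦
      gaussianPDFReal_nonneg 0 1 y), stdNormalCDF, stdNormalPDF_eq_gaussianPDFReal]

lemma hasDerivAt_stdNormalCDF (x : ℝ) : HasDerivAt stdNormalCDF (stdNormalPDF x) x := by
  have hint : Integrable stdNormalPDF := by
    rw [stdNormalPDF_eq_gaussianPDFReal]; exact integrable_gaussianPDFReal 0 1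
  have hΦ : stdNormalCDF = fun y ↦ stdNormalCDF 0 + ∫ τ in (0:ℝ)..y, stdNormalPDF τ := by
    ext y
    rw [← intervalIntegral.integral_Iic_sub_Iic hint.integrableOn hint.integrableOn,
      stdNormalCDF, stdNormalCDF]
    ring
  rw [hΦ]
  exact (continuous_stdNormalPDF.integral_hasStrictDerivAt 0 x).hasDerivAt.const_add _

lemma continuous_stdNormalCDF : Continuous stdNormalCDF :=
  continuous_iff_continuousAt.2 fun x ↦ (hasDerivAt_stdNormalCDF x).continuousAt

lemma strictMono_stdNormalCDF : StrictMono stdNormalCDF :=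
  strictMono_of_hasDerivAt_pos hasDerivAt_stdNormalCDF fun x ↦ by
    rw [stdNormalPDF_eq_gaussianPDFReal]; exact gaussianPDFReal_pos 0 1 x one_ne_zero

lemma stdNormalCDF_stdNormalCDFInv {p : ℝ} (hp : p ∈ Ioo 0 1) :
    stdNormalCDF (stdNormalCDFInv p) = p := by
  have hbot : Tendsto stdNormalCDF atBot (𝓝 0) := stdNormalCDF_eq_cdf ▸ tendsto_cdf_atBot _
  have htop : Tendsto stdNormalCDF atTop (𝓝 1) := stdNormalCDF_eq_cdf ▸ tendsto_cdf_atTop _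
  exact Function.invFun_eq <| mem_range_of_exists_le_of_exists_ge continuous_stdNormalCDF
    ((hbot.eventually_le_const hp.1).exists) ((htop.eventually_const_le hp.2).exists)

lemma monotoneOn_stdNormalCDFInv : MonotoneOn stdNormalCDFInv (Ioo 0 1) := fun p hp q hq hpq ↦
  strictMono_stdNormalCDF.le_iff_le.1 <| by
    rwa [stdNormalCDF_stdNormalCDFInv hp, stdNormalCDF_stdNormalCDFInv hq]

lemma inv_sqrt_two_pi_le_one : (√(2 * Real.pi))⁻¹ ≤ 1 :=
  inv_le_one_of_one_le₀ <| Real.one_le_sqrt.2 <| by nlinarith [Real.pi_gt_three]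

lemma stdNormalPDF_le_one (x : ℝ) : stdNormalPDF x ≤ 1 :=
  mul_le_one₀ inv_sqrt_two_pi_le_one (Real.exp_nonneg _) (Real.exp_le_one_iff.2 (by nlinarith))

lemma stdNormalPDF_mul_abs_le_one (x : ℝ) : stdNormalPDF x * |x| ≤ 1 := by
  have hx : |x| ≤ Real.exp (x ^ 2 / 2) := by
    nlinarith [Real.add_one_le_exp (x ^ 2 / 2), sq_abs x, sq_nonneg (|x| - 1)]
  have hexp : Real.exp (-x ^ 2 / 2) * |x| ≤ 1 := by
    calc Real.exp (-x ^ 2 / 2) * |x| ≤ Real.exp (-x ^ 2 / 2) * Real.exp (x ^ 2 / 2) := by gcongr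
      _ = 1 := by rw [← Real.exp_add]; ring_nf; exact Real.exp_zero
  rw [stdNormalPDF, mul_assoc]
  exact mul_le_one₀ inv_sqrt_two_pi_le_one (by positivity) hexp

lemma abs_stdNormalPDF_mul_sub_le (c b : ℝ) {p q : ℝ} (hp : 0 < p) (hq : 0 < q) :
    |stdNormalPDF ((c - p * b) / q) * ((c - p * b) / (2 * q ^ 3) - b / (2 * (p * q)))| ≤
      1 / (2 * q ^ 2) + (|c| + q) / (2 * p ^ 2 * q) := by
  set g := (c - p * b) / q with hg
  have hφ : 0 ≤ stdNormalPDF g := by unfold stdNormalPDF; positivity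
  have hpb : stdNormalPDF g * |p * b| ≤ |c| + q := by
    calc stdNormalPDF g * |p * b| = stdNormalPDF g * |c - g * q| := by
          rw [hg, div_mul_cancel₀ _ hq.ne', sub_sub_cancel]
      _ ≤ stdNormalPDF g * (|c| + |g| * q) := by
          gcongr; exact (abs_sub _ _).trans_eq (by rw [abs_mul, abs_of_pos hq])
      _ = stdNormalPDF g * |c| + stdNormalPDF g * |g| * q := by ring
      _ ≤ |c| + q := by
          gcongr
          · exact mul_le_of_le_one_left (abs_nonneg c) (stdNormalPDF_le_one g)
          · exact mul_le_of_le_one_left hq.le (stdNormalPDF_mul_abs_le_one g)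
  have hsplit : stdNormalPDF g * ((c - p * b) / (2 * q ^ 3) - b / (2 * (p * q))) =
      stdNormalPDF g * g / (2 * q ^ 2) - stdNormalPDF g * (p * b) / (2 * p ^ 2 * q) := by
    rw [hg]; field_simp
  rw [hsplit]
  refine (abs_sub _ _).trans (add_le_add ?_ ?_)
  · rw [abs_div, abs_mul, abs_of_nonneg hφ, abs_of_pos (by positivity : (0:ℝ) < 2 * q ^ 2)]
    gcongr
    exact stdNormalPDF_mul_abs_le_one g
  · rw [abs_div, abs_mul, abs_of_nonneg hφ, abs_of_pos (by positivity : (0:ℝ) < 2 * p ^ 2 * q)]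
    gcongr

lemma hasDerivAt_stdNormalCDF_sqrt_div {t c b x : ℝ} (hx : 0 < x) (hxt : x < t) :
    HasDerivAt (fun σ ↦ stdNormalCDF ((c - √σ * b) / √(t - σ)))
      (stdNormalPDF ((c - √x * b) / √(t - x)) *
        ((c - √x * b) / (2 * √(t - x) ^ 3) - b / (2 * √(x * (t - x))))) x := by
  have htx : 0 < t - x := sub_pos.2 hxt
  have hnum : HasDerivAt (fun σ ↦ c - √σ * b) (-(1 / (2 * √x) * b)) x :=
    ((Real.hasDerivAt_sqrt hx.ne').mul_const b).const_sub c
  have hden : HasDerivAt (fun σ ↦ √(t - σ)) (1 / (2 * √(t - x)) * (-1)) x :=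
    (Real.hasDerivAt_sqrt htx.ne').comp x ((hasDerivAt_id x).const_sub t)
  refine ((hasDerivAt_stdNormalCDF _).comp x
    (hnum.div hden (Real.sqrt_pos.2 htx).ne')).congr_deriv ?_
  simp only [Pi.div_apply]
  congr 1
  rw [Real.sqrt_mul hx.le]
  field_simp
  ring

lemma norm_deriv_stdNormalCDF_sqrt_div_le {t c b x : ℝ} (hx : 0 < x) (hxt : x < t) :
    ‖stdNormalPDF ((c - √x * b) / √(t - x)) *
        ((c - √x * b) / (2 * √(t - x) ^ 3) - b / (2 * √(x * (t - x))))‖ ≤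
      1 / (2 * (t - x)) + (|c| + √(t - x)) / (2 * x * √(t - x)) := by
  have htx : 0 < t - x := sub_pos.2 hxt
  have h := abs_stdNormalPDF_mul_sub_le c b (Real.sqrt_pos.2 hx) (Real.sqrt_pos.2 htx)
  rwa [Real.sq_sqrt hx.le, Real.sq_sqrt htx.le, ← Real.sqrt_mul hx.le] at h

theorem hasDerivAt_integral_stdNormalCDF_sqrt_div {α : Type*} [MeasurableSpace α] {μ : Measure α}
    [IsFiniteMeasure μ] {β : α → ℝ} (hβ : AEMeasurable β μ) (c : ℝ) {s t : ℝ} (hs : 0 < s)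
    (hst : s < t) :
    HasDerivAt (fun σ ↦ ∫ a, stdNormalCDF ((c - √σ * β a) / √(t - σ)) ∂μ)
      (∫ a, stdNormalPDF ((c - √s * β a) / √(t - s)) *
        ((c - √s * β a) / (2 * √(t - s) ^ 3) - β a / (2 * √(s * (t - s)))) ∂μ) s := by
  have hΦ : Measurable stdNormalCDF := continuous_stdNormalCDF.measurable
  have hφ : Measurable stdNormalPDF := continuous_stdNormalPDF.measurable
  set K := Icc (s / 2) ((s + t) / 2)
  have hKs : K ∈ 𝓝 s := Icc_mem_nhds (by linarith) (by linarith)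
  have hK : ∀ x ∈ K, 0 < x ∧ x < t := fun x hx ↦ ⟨by linarith [hx.1], by linarith [hx.2]⟩
  obtain ⟨M, hM⟩ := isCompact_Icc.exists_bound_of_continuousOn
    (f := fun x ↦ 1 / (2 * (t - x)) + (|c| + √(t - x)) / (2 * x * √(t - x))) <| by
      intro x hx
      obtain ⟨hx0, hxt⟩ := hK x hx
      have : √(t - x) ≠ 0 := (Real.sqrt_pos.2 (sub_pos.2 hxt)).ne'
      refine ContinuousAt.continuousWithinAt ?_
      fun_prop (disch := first | positivity | exact this | linarith)
  refine (hasDerivAt_integral_of_dominated_loc_of_deriv_le hKs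
    (F := fun σ a ↦ stdNormalCDF ((c - √σ * β a) / √(t - σ)))
    (F' := fun x a ↦ stdNormalPDF ((c - √x * β a) / √(t - x)) *
      ((c - √x * β a) / (2 * √(t - x) ^ 3) - β a / (2 * √(x * (t - x)))))
    ?_ ?_ ?_ ?_ (integrable_const M) ?_).2
  · exact .of_forall fun σ ↦ (by fun_prop : AEMeasurable _ μ).aestronglyMeasurable
  · refine Integrable.of_bound (by fun_prop : AEMeasurable _ μ).aestronglyMeasurable 1
      (.of_forall fun a ↦ ?_)
    rw [stdNormalCDF_eq_cdf, Real.norm_of_nonneg (cdf_nonneg _ _)]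
    exact cdf_le_one _ _
  · exact (by fun_prop : AEMeasurable _ μ).aestronglyMeasurable
  · refine .of_forall fun a x hx ↦ ?_
    obtain ⟨hx0, hxt⟩ := hK x hx
    exact (norm_deriv_stdNormalCDF_sqrt_div_le hx0 hxt).trans ((le_abs_self _).trans (hM x hx))
  · exact .of_forall fun a x hx ↦ hasDerivAt_stdNormalCDF_sqrt_div (hK x hx).1 (hK x hx).2

lemma psi_of_lt {s t u v : ℝ} (hv : v ∈ Ioo 0 1) (hst : s < t) :
    psi s t u v = ∫ w in (0:ℝ)..u,
      stdNormalCDF ((√t * stdNormalCDFInv v - √s * stdNormalCDFInv w) / √(t - s)) := by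
  have hts : 0 < t - s := sub_pos.2 hst
  simp only [psi, psiIntegrand, abs_of_pos hts, hts, if_true, not_le.2 hv.1, not_le.2 hv.2,
    if_false, max_eq_right hst.le, min_eq_left hst.le]

/-- For u, v ∈ (0,1) and 0 < s < t, the partial derivative of ψ(s,t;u,v) with respect
to s exists and is given by the stated integral formula. -/
theorem psi_hasDerivAt_s (u v s t : ℝ) (hu : u ∈ Set.Ioo (0:ℝ) 1) (hv : v ∈ Set.Ioo (0:ℝ) 1)
    (hs : 0 < s) (hst : s < t) :
    HasDerivAt (fun σ : ℝ => psi σ t u v)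
      (∫ w in (0:ℝ)..u,
        stdNormalPDF ((Real.sqrt t * stdNormalCDFInv v - Real.sqrt s * stdNormalCDFInv w) /
            Real.sqrt (t - s)) *
          ((Real.sqrt t * stdNormalCDFInv v - Real.sqrt s * stdNormalCDFInv w) /
              (2 * Real.sqrt (t - s) ^ 3) -
            stdNormalCDFInv w / (2 * Real.sqrt (s * (t - s))))) s := by
  have hΦinv : AEMeasurable stdNormalCDFInv (volume.restrict (Ioc 0 u)) :=
    aemeasurable_restrict_of_monotoneOn measurableSet_Ioc
      (monotoneOn_stdNormalCDFInv.mono (Ioc_subset_Ioo_right hu.2))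
  have h := hasDerivAt_integral_stdNormalCDF_sqrt_div hΦinv (√t * stdNormalCDFInv v) hs hst
  simp only [← intervalIntegral.integral_of_le hu.1.le] at h
  exact h.congr_of_eventuallyEq <| by
    filter_upwards [Iio_mem_nhds hst] with σ hσ using psi_of_lt hv hσ
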